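/- Let u_ε : ∂Ω^ε → ℝ be functions and Φ_ε : ∂Ω → ∂Ω^ε diffeomorphisms with Jacobians |JΦ_ε| → 1 uniformly, such that u_ε ∘ Φ_ε → u in L¹(∂Ω) and surface measures σ_ε(Φ_ε(B)) → σ(B) for each pseudoball B ⊆ ∂Ω with σ(B) > 0. Then for each pseudoball B(ξ,t), the averages satisfy ⨍_{Φ_ε(B(ξ,t))} u_ε dσ_ε → ⨍_{B(ξ,t)} u dσ, and consequently ∫_{B(ξ,t)} |u - ⨍_{B(ξ,t)} u| dσ ≤ liminf_ε ∫_{Φ_ε(B(ξ,t))} |u_ε - ⨍ u_ε| dσ_ε. In particular ‖u‖_{BMO(∂Ω)} ≤ C sup_ε ‖u_ε‖_{BMO_ε(∂Ω^ε)}. -/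

import Mathlib

/-!
Since `J n → 1` uniformly, `J n` is eventually bounded by `2`, so
`∫ v n J n - ∫ u J n` is controlled by `2 ‖v n - u‖₁`, while `∫ u J n → ∫ u` by dominated
convergence. Applied on a pseudoball `B` to `v n` and to `1`, this gives convergence of the
transported averages; applied to `|v n - a n|` and `|u - a|`, whose `L¹` distance is at most
`‖v n - u‖₁ + |a n - a| σ(B)`, it gives convergence of the transported mean oscillations. The
oscillation inequality and the BMO bound (with `C = 1`) follow by passing to the limit.
-/

open MeasureTheory Filter Topology

theorem TendstoUniformly.eventually_abs_le_two {X ι : Type*} {l : Filter ι} {J : ι → X → ℝ}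
    (hJ : TendstoUniformly J (fun _ => (1 : ℝ)) l) :
    ∀ᶠ i in l, ∀ x, |J i x| ≤ 2 := by
  filter_upwards [Metric.tendstoUniformly_iff.mp hJ 1 one_pos] with i hi x
  have hdist : |J i x - 1| < 1 := by simpa [Real.dist_eq, abs_sub_comm] using hi x
  linarith [abs_sub_abs_le_abs_sub (J i x) 1, abs_one (α := ℝ)]

section L1Convergence

variable {X ι : Type*} [MeasurableSpace X] {μ : Measure X} {l : Filter ι} {J : ι → X → ℝ}

theorem tendsto_integral_mul_of_tendstoUniformly [l.IsCountablyGenerated] {f : X → ℝ}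
    (hf : Integrable f μ) (hJm : ∀ i, AEStronglyMeasurable (J i) μ)
    (hJ : TendstoUniformly J (fun _ => (1 : ℝ)) l) :
    Tendsto (fun i => ∫ x, f x * J i x ∂μ) l (𝓝 (∫ x, f x ∂μ)) := by
  have hlim : ∀ x, Tendsto (fun i => f x * J i x) l (𝓝 (f x)) := fun x => by
    simpa using (hJ.tendsto_at x).const_mul (f x)
  refine tendsto_integral_filter_of_dominated_convergence (fun x => |f x| * 2)
    (Eventually.of_forall fun i => hf.aestronglyMeasurable.mul (hJm i)) ?_
    (hf.abs.mul_const 2) (ae_of_all _ hlim)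
  filter_upwards [hJ.eventually_abs_le_two] with i hi
  refine ae_of_all _ fun x => ?_
  rw [norm_mul, Real.norm_eq_abs]
  exact mul_le_mul_of_nonneg_left (hi x) (abs_nonneg _)

theorem tendsto_integral_mul_of_tendsto_integral_abs_sub [l.IsCountablyGenerated] {f : X → ℝ}
    {g : ι → X → ℝ} (hf : Integrable f μ) (hg : ∀ i, Integrable (g i) μ)
    (hJm : ∀ i, AEStronglyMeasurable (J i) μ) (hJ : TendstoUniformly J (fun _ => (1 : ℝ)) l)
    (hgf : Tendsto (fun i => ∫ x, |g i x - f x| ∂μ) l (𝓝 0)) :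
    Tendsto (fun i => ∫ x, g i x * J i x ∂μ) l (𝓝 (∫ x, f x ∂μ)) := by
  have hbound := hJ.eventually_abs_le_two
  have hmul : ∀ᶠ i in l, ∀ h : X → ℝ, Integrable h μ → Integrable (fun x => h x * J i x) μ := by
    filter_upwards [hbound] with i hi h hh
    exact hh.mul_bdd (hJm i) (ae_of_all _ fun x => (Real.norm_eq_abs _).trans_le (hi x))
  have herr : Tendsto (fun i => ∫ x, (g i x - f x) * J i x ∂μ) l (𝓝 0) := by
    refine squeeze_zero_norm' ?_ (by simpa using hgf.mul_const 2)
    filter_upwards [hbound] with i hi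
    calc ‖∫ x, (g i x - f x) * J i x ∂μ‖
        ≤ ∫ x, ‖(g i x - f x) * J i x‖ ∂μ := norm_integral_le_integral_norm _
      _ ≤ ∫ x, |g i x - f x| * 2 ∂μ :=
          integral_mono_of_nonneg (ae_of_all _ fun _ => norm_nonneg _)
            (((hg i).sub hf).abs.mul_const 2) (ae_of_all _ fun x => by
              dsimp only
              rw [norm_mul, Real.norm_eq_abs, Real.norm_eq_abs]
              exact mul_le_mul_of_nonneg_left (hi x) (abs_nonneg _))
      _ = (∫ x, |g i x - f x| ∂μ) * 2 := integral_mul_const _ _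
  have hsum := herr.add (tendsto_integral_mul_of_tendstoUniformly hf hJm hJ)
  rw [zero_add] at hsum
  refine hsum.congr' ?_
  filter_upwards [hmul] with i hi
  rw [← integral_add (hi (fun x => g i x - f x) ((hg i).sub hf)) (hi _ hf)]
  congr 1 with x
  ring

theorem tendsto_integral_abs_abs_sub [IsFiniteMeasure μ] {f : X → ℝ} {g : ι → X → ℝ}
    (hf : Integrable f μ) (hg : ∀ i, Integrable (g i) μ) {c : ι → ℝ} {a : ℝ}
    (hc : Tendsto c l (𝓝 a)) (hgf : Tendsto (fun i => ∫ x, |g i x - f x| ∂μ) l (𝓝 0)) :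
    Tendsto (fun i => ∫ x, |(|g i x - c i| - |f x - a|)| ∂μ) l (𝓝 0) := by
  refine squeeze_zero (fun i => integral_nonneg fun x => abs_nonneg _) (fun i => ?_)
    (by simpa using hgf.add ((hc.sub_const a).abs.mul_const (μ.real Set.univ)))
  calc ∫ x, |(|g i x - c i| - |f x - a|)| ∂μ
      ≤ ∫ x, (|g i x - f x| + |c i - a|) ∂μ := by
        refine integral_mono (((hg i).sub (integrable_const _)).abs.sub
          (hf.sub (integrable_const _)).abs).abs
          (((hg i).sub hf).abs.add (integrable_const _)) fun x => ?_
        calc |(|g i x - c i| - |f x - a|)|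
            ≤ |(g i x - f x) - (c i - a)| := by
              rw [sub_sub_sub_comm]; exact abs_abs_sub_abs_le_abs_sub _ _
          _ ≤ |g i x - f x| + |c i - a| := abs_sub _ _
    _ = (∫ x, |g i x - f x| ∂μ) + |c i - a| * μ.real Set.univ := by
        rw [integral_add (f := fun x => |g i x - f x|) ((hg i).sub hf).abs (integrable_const _),
          integral_const, smul_eq_mul, mul_comm]

theorem tendsto_setIntegral_abs_sub {f : X → ℝ} {g : ι → X → ℝ} (hf : Integrable f μ)
    (hg : ∀ i, Integrable (g i) μ) (hgf : Tendsto (fun i => ∫ x, |g i x - f x| ∂μ) l (𝓝 0))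
    (s : Set X) : Tendsto (fun i => ∫ x in s, |g i x - f x| ∂μ) l (𝓝 0) :=
  squeeze_zero (fun _ => integral_nonneg fun _ => abs_nonneg _)
    (fun i => setIntegral_le_integral ((hg i).sub hf).abs (ae_of_all _ fun _ => abs_nonneg _)) hgf

end L1Convergence

section TransportedAverages

variable {X ι : Type*} [MeasurableSpace X] {σ : Measure X} [IsFiniteMeasure σ] {l : Filter ι}
  [l.IsCountablyGenerated] {u : X → ℝ} {v J : ι → X → ℝ} {B : Set X}

theorem tendsto_setIntegral_of_tendstoUniformly_one (hJm : ∀ i, AEStronglyMeasurable (J i) σ)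
    (hJ : TendstoUniformly J (fun _ => (1 : ℝ)) l) (B : Set X) :
    Tendsto (fun i => ∫ x in B, J i x ∂σ) l (𝓝 (σ B).toReal) := by
  simpa [Measure.real] using tendsto_integral_mul_of_tendstoUniformly (μ := σ.restrict B)
    (integrable_const (1 : ℝ)) (fun i => (hJm i).restrict) hJ

theorem tendsto_weighted_setAverage (hu : Integrable u σ) (hv : ∀ i, Integrable (v i) σ)
    (hJm : ∀ i, AEStronglyMeasurable (J i) σ) (hJ : TendstoUniformly J (fun _ => (1 : ℝ)) l)
    (hvu : Tendsto (fun i => ∫ x, |v i x - u x| ∂σ) l (𝓝 0)) (hB : 0 < σ B) :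
    Tendsto (fun i => (∫ x in B, v i x * J i x ∂σ) / (∫ x in B, J i x ∂σ)) l
      (𝓝 ((∫ x in B, u x ∂σ) / (σ B).toReal)) :=
  (tendsto_integral_mul_of_tendsto_integral_abs_sub hu.restrict (fun i => (hv i).restrict)
      (fun i => (hJm i).restrict) hJ (tendsto_setIntegral_abs_sub hu hv hvu B)).div
    (tendsto_setIntegral_of_tendstoUniformly_one hJm hJ B)
    (ENNReal.toReal_pos hB.ne' (measure_ne_top σ B)).ne'

theorem tendsto_weighted_meanOscillation (hu : Integrable u σ) (hv : ∀ i, Integrable (v i) σ)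
    (hJm : ∀ i, AEStronglyMeasurable (J i) σ) (hJ : TendstoUniformly J (fun _ => (1 : ℝ)) l)
    (hvu : Tendsto (fun i => ∫ x, |v i x - u x| ∂σ) l (𝓝 0)) (hB : 0 < σ B) :
    Tendsto (fun i => ∫ x in B,
        |v i x - (∫ y in B, v i y * J i y ∂σ) / (∫ y in B, J i y ∂σ)| * J i x ∂σ) l
      (𝓝 (∫ x in B, |u x - (∫ y in B, u y ∂σ) / (σ B).toReal| ∂σ)) :=
  tendsto_integral_mul_of_tendsto_integral_abs_sub
    (hu.restrict.sub (integrable_const _)).abs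
    (fun i => ((hv i).restrict.sub (integrable_const _)).abs) (fun i => (hJm i).restrict) hJ
    (tendsto_integral_abs_abs_sub hu.restrict (fun i => (hv i).restrict)
      (tendsto_weighted_setAverage hu hv hJm hJ hvu hB)
      (tendsto_setIntegral_abs_sub hu hv hvu B))

end TransportedAverages

theorem stmt_14_general {X : Type*} [MeasurableSpace X] (σ : Measure X) [IsFiniteMeasure σ]
    (u : X → ℝ) (hu : Integrable u σ)
    (v J : ℕ → X → ℝ)
    (hv : ∀ n, Integrable (v n) σ)
    (hJ_meas : ∀ n, Measurable (J n))
    (hJ_unif : TendstoUniformly J (fun _ => (1:ℝ)) atTop)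
    (hL1 : Tendsto (fun n => ∫ x, |v n x - u x| ∂σ) atTop (𝓝 0))
    (𝔅 : Set (Set X))
    (h𝔅 : ∀ B ∈ 𝔅, MeasurableSet B ∧ 0 < σ B) :
    (∀ B ∈ 𝔅, Tendsto
        (fun n => (∫ x in B, v n x * J n x ∂σ) / (∫ x in B, J n x ∂σ)) atTop
        (𝓝 ((∫ x in B, u x ∂σ) / (σ B).toReal))) ∧
    (∀ B ∈ 𝔅,
      (∫ x in B, |u x - (∫ y in B, u y ∂σ) / (σ B).toReal| ∂σ)
        ≤ liminf (fun n => ∫ x in B,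
            |v n x - (∫ y in B, v n y * J n y ∂σ) / (∫ y in B, J n y ∂σ)| * J n x ∂σ)
          atTop) ∧
    (∃ C : ℝ, 0 < C ∧ ∀ M : ℝ, 0 ≤ M →
      (∀ n, ∀ B ∈ 𝔅,
        (∫ x in B, |v n x - (∫ y in B, v n y * J n y ∂σ) / (∫ y in B, J n y ∂σ)| * J n x ∂σ)
          ≤ M * (∫ x in B, J n x ∂σ)) →
      ∀ B ∈ 𝔅,
        (∫ x in B, |u x - (∫ y in B, u y ∂σ) / (σ B).toReal| ∂σ)
          ≤ C * M * (σ B).toReal) := by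
  have hJm : ∀ n, AEStronglyMeasurable (J n) σ := fun n => (hJ_meas n).aestronglyMeasurable
  have hosc : ∀ B ∈ 𝔅, _ := fun B hB =>
    tendsto_weighted_meanOscillation hu hv hJm hJ_unif hL1 (h𝔅 B hB).2
  refine ⟨fun B hB => tendsto_weighted_setAverage hu hv hJm hJ_unif hL1 (h𝔅 B hB).2,
    fun B hB => (hosc B hB).liminf_eq.ge, 1, one_pos, fun M _ hbound B hB => ?_⟩
  rw [one_mul]
  exact le_of_tendsto_of_tendsto' (hosc B hB)
    ((tendsto_setIntegral_of_tendstoUniformly_one hJm hJ_unif B).const_mul M) (hbound · B hB)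

/-- Stability of BMO under approximation by smoothed boundary values via
diffeomorphisms `Φ_ε : ∂Ω → ∂Ω^ε`, formulated on the fixed boundary `X = ∂Ω`:
`v n = u_ε ∘ Φ_ε`, `J n = |JΦ_ε|` are the Jacobians (converging uniformly to 1),
and `v n → u` in `L¹(σ)`.  The transported averages
`⨍_{Φ_ε(B)} u_ε dσ_ε = (∫_B v n J n dσ)/(∫_B J n dσ)` converge to `⨍_B u dσ`,
the mean oscillation of `u` on `B` is bounded by the liminf of the transported
mean oscillations, and consequently `‖u‖_{BMO} ≤ C sup_ε ‖u_ε‖_{BMO_ε}`. -/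
theorem stmt_14 {X : Type*} [MeasurableSpace X] (σ : Measure X) [IsFiniteMeasure σ]
    (u : X → ℝ) (hu : Integrable u σ)
    (v J : ℕ → X → ℝ)
    (hv : ∀ n, Integrable (v n) σ)
    (hJ_meas : ∀ n, Measurable (J n))
    (hJ_pos : ∀ n x, 0 < J n x)
    (hJ_unif : TendstoUniformly J (fun _ => (1:ℝ)) atTop)
    (hL1 : Tendsto (fun n => ∫ x, |v n x - u x| ∂σ) atTop (𝓝 0))
    (𝔅 : Set (Set X))
    (h𝔅 : ∀ B ∈ 𝔅, MeasurableSet B ∧ 0 < σ B) :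
    (∀ B ∈ 𝔅, Tendsto
        (fun n => (∫ x in B, v n x * J n x ∂σ) / (∫ x in B, J n x ∂σ)) atTop
        (𝓝 ((∫ x in B, u x ∂σ) / (σ B).toReal))) ∧
    (∀ B ∈ 𝔅,
      (∫ x in B, |u x - (∫ y in B, u y ∂σ) / (σ B).toReal| ∂σ)
        ≤ liminf (fun n => ∫ x in B,
            |v n x - (∫ y in B, v n y * J n y ∂σ) / (∫ y in B, J n y ∂σ)| * J n x ∂σ)
          atTop) ∧
    (∃ C : ℝ, 0 < C ∧ ∀ M : ℝ, 0 ≤ M →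
      (∀ n, ∀ B ∈ 𝔅,
        (∫ x in B, |v n x - (∫ y in B, v n y * J n y ∂σ) / (∫ y in B, J n y ∂σ)| * J n x ∂σ)
          ≤ M * (∫ x in B, J n x ∂σ)) →
      ∀ B ∈ 𝔅,
        (∫ x in B, |u x - (∫ y in B, u y ∂σ) / (σ B).toReal| ∂σ)
          ≤ C * M * (σ B).toReal) :=
  stmt_14_general σ u hu v J hv hJ_meas hJ_unif hL1 𝔅 h𝔅
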